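/- arXiv:1811.08197 — 2 statements merged into one kernel-verified Lean document; each statement's English description precedes it below -/
import Mathlib

section
/- Let G be a finite simple graph on vertex set V with |V| ≥ 3. If there exists f : V → V such that (a) for all v, G.Adj v (f v); (b) every v has exactly one f-preimage; and (c) every nonempty subset X ⊆ V closed under f equals V, then G contains a Hamiltonian cycle (a cycle visiting every vertex exactly once). -/
/-!
The hypotheses force `f` to be a single cyclic permutation of `V`: the forward orbit of any point
is a nonempty `f`-closed set, hence all of `V`, so every point is periodic with minimal period
`|V|`. Following the edges `v → f v` around this orbit gives a closed walk through every vertex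
exactly once, which is a cycle because `|V| ≥ 3`.
-/

open Function

namespace Function

variable {α : Type*} {f : α → α}

theorem exists_iterate_eq_of_invariant_eq_univ
    (hc : ∀ X : Set α, X.Nonempty → (∀ v ∈ X, f v ∈ X) → X = Set.univ) (v x : α) :
    ∃ k, f^[k] v = x := by
  have horbit : Set.range (f^[·] v) = Set.univ :=
    hc _ ⟨v, 0, rfl⟩ fun _ ⟨k, hk⟩ ↦ ⟨k + 1, by simp only [iterate_succ_apply', hk]⟩
  exact Set.eq_univ_iff_forall.mp horbit x

theorem mem_periodicPts_of_invariant_eq_univ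
    (hc : ∀ X : Set α, X.Nonempty → (∀ v ∈ X, f v ∈ X) → X = Set.univ) (v : α) :
    v ∈ periodicPts f := by
  obtain ⟨k, hk⟩ := exists_iterate_eq_of_invariant_eq_univ hc (f v) v
  exact mk_mem_periodicPts k.succ_pos hk

theorem minimalPeriod_eq_card_of_invariant_eq_univ [Fintype α]
    (hc : ∀ X : Set α, X.Nonempty → (∀ v ∈ X, f v ∈ X) → X = Set.univ) (v : α) :
    minimalPeriod f v = Fintype.card α := by
  classical
  refine le_antisymm minimalPeriod_le_card ?_
  have hpos := minimalPeriod_pos_of_mem_periodicPts (mem_periodicPts_of_invariant_eq_univ hc v)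
  have hcover : Finset.univ ⊆ (Finset.range (minimalPeriod f v)).image (f^[·] v) := by
    intro x _
    obtain ⟨k, rfl⟩ := exists_iterate_eq_of_invariant_eq_univ hc v x
    exact Finset.mem_image.mpr
      ⟨k % minimalPeriod f v, Finset.mem_range.mpr (k.mod_lt hpos), iterate_mod_minimalPeriod_eq⟩
  simpa using (Finset.card_le_card hcover).trans Finset.card_image_le

end Function

namespace SimpleGraph

variable {V : Type*} {G : SimpleGraph V}

def orbitWalk {f : V → V} (hf : ∀ v, G.Adj v (f v)) : ∀ (k : ℕ) (v : V), G.Walk v (f^[k] v)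
  | 0, _ => .nil
  | k + 1, v => .cons (hf v) (orbitWalk hf k (f v))

variable {f : V → V} (hf : ∀ v, G.Adj v (f v))

@[simp]
theorem length_orbitWalk (k : ℕ) (v : V) : (orbitWalk hf k v).length = k := by
  induction k generalizing v with
  | zero => rfl
  | succ k ih => simp [orbitWalk, ih]

theorem support_orbitWalk (k : ℕ) (v : V) :
    (orbitWalk hf k v).support = (List.range (k + 1)).map (f^[·] v) := by
  induction k generalizing v with
  | zero => rfl
  | succ k ih => simp [orbitWalk, ih, List.range_succ_eq_map]

theorem isPath_orbitWalk {k : ℕ} {v : V} (hk : k < minimalPeriod f v) :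
    (orbitWalk hf k v).IsPath := by
  rw [Walk.isPath_def, support_orbitWalk]
  refine List.nodup_range.map_on fun i hi j hj hij ↦ ?_
  exact iterate_injOn_Iio_minimalPeriod (by simp at hi ⊢; omega) (by simp at hj ⊢; omega) hij

end SimpleGraph

namespace SimpleGraph.Walk

variable {V : Type*} [Fintype V] [DecidableEq V] {G : SimpleGraph V}

theorem IsHamiltonian.cons_isHamiltonianCycle {u v : V} {p : G.Walk v u}
    (hp : p.IsHamiltonian) (h : G.Adj u v) (h3 : 3 ≤ Fintype.card V) :
    (cons h p).IsHamiltonianCycle := by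
  have hlen := hp.length_eq
  rw [isHamiltonianCycle_iff_isCycle_and_length_eq, isCycle_iff_isPath_tail_and_le_length]
  simp only [tail_cons, length_cons]
  exact ⟨⟨(isPath_copy _ _ _).mpr hp.isPath, by omega⟩, by omega⟩

end SimpleGraph.Walk

open SimpleGraph Walk in
theorem stmt_13_general {V : Type*} [Fintype V] [DecidableEq V] (G : SimpleGraph V)
    (h3 : 3 ≤ Fintype.card V) (f : V → V)
    (ha : ∀ v, G.Adj v (f v))
    (hc : ∀ X : Set V, X.Nonempty → (∀ v ∈ X, f v ∈ X) → X = Set.univ) :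
    ∃ (v : V) (c : G.Walk v v), c.IsHamiltonianCycle := by
  obtain ⟨v⟩ : Nonempty V := Fintype.card_pos_iff.mp (by omega)
  have hperiod := minimalPeriod_eq_card_of_invariant_eq_univ hc
  have hreturn : f^[Fintype.card V - 1] (f v) = v := by
    rw [← iterate_succ_apply, Nat.succ_eq_add_one, Nat.sub_add_cancel (by omega), ← hperiod v,
      iterate_minimalPeriod]
  let p : G.Walk (f v) v := (orbitWalk ha _ (f v)).copy rfl hreturn
  have hp : p.IsHamiltonian := by
    refine isHamiltonian_iff_isPath_and_length_eq.mpr ⟨?_, by simp [p]⟩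
    exact (isPath_copy _ _ _).mpr (isPath_orbitWalk ha (by rw [hperiod]; omega))
  exact ⟨v, cons (ha v) p, hp.cons_isHamiltonianCycle (ha v) h3⟩

theorem stmt_13 {V : Type*} [Fintype V] [DecidableEq V] (G : SimpleGraph V)
    (h3 : 3 ≤ Fintype.card V) (f : V → V)
    (ha : ∀ v, G.Adj v (f v))
    (hb : ∀ v : V, ∃! w : V, f w = v)
    (hc : ∀ X : Set V, X.Nonempty → (∀ v ∈ X, f v ∈ X) → X = Set.univ) :
    ∃ (v : V) (c : G.Walk v v), c.IsHamiltonianCycle :=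
  stmt_13_general G h3 f ha hc
end

section
/- Let G be a finite simple graph on vertex set V with |V| ≥ 3. If G contains a Hamiltonian cycle, then there exists f : V → V such that for all v, G.Adj v (f v), every v has exactly one f-preimage, and every nonempty f-closed subset of V equals V. -/
/-! Going once around a Hamiltonian cycle `v = v₀, v₁, …, vₙ = v` defines the cyclic permutation
`vᵢ ↦ vᵢ₊₁` (`List.formPerm` of the support without its repeated base point). It sends every vertex
to a neighbour, and since it is a single cycle moving every vertex, the forward orbit of any vertex
is all of `V`; hence a nonempty invariant set is everything. -/

theorem List.rel_formPerm_of_isChain_cons {α : Type*} [DecidableEq α] {R : α → α → Prop}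
    {a : α} {l : List α} (hl : l.Nodup) (hchain : (a :: l).IsChain R)
    (hlast : l.getLast? = some a) {x : α} (hx : x ∈ l) : R x (l.formPerm x) := by
  obtain ⟨i, hi, rfl⟩ := List.getElem_of_mem hx
  rw [List.formPerm_apply_getElem l hl i hi]
  rw [List.isChain_iff_getElem] at hchain
  by_cases hwrap : i + 1 < l.length
  · have hstep := hchain (i + 1) (by simpa using hwrap)
    simpa only [List.getElem_cons_succ, Nat.mod_eq_of_lt hwrap] using hstep
  · have hi_last : i = l.length - 1 := by omega
    have hxa : l[i] = a := by
      rw [List.getLast?_eq_getElem?, ← hi_last, List.getElem?_eq_getElem hi] at hlast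
      exact Option.some.inj hlast
    have hmod : (i + 1) % l.length = 0 := by rw [show i + 1 = l.length by omega, Nat.mod_self]
    simpa [hxa, hmod] using hchain 0 (by simp; omega)

theorem Equiv.Perm.IsCycle.eq_univ_of_mapsTo {α : Type*} [Finite α] {σ : Equiv.Perm α}
    (hσ : σ.IsCycle) (hσ_ne : ∀ x, σ x ≠ x) {X : Set α} (hX : X.Nonempty)
    (hmaps : Set.MapsTo σ X X) : X = .univ := by
  obtain ⟨x, hx⟩ := hX
  refine Set.eq_univ_of_forall fun y => ?_
  obtain ⟨n, rfl⟩ := hσ.exists_pow_eq (hσ_ne x) (hσ_ne y)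
  rw [Equiv.Perm.coe_pow]
  exact hmaps.iterate n hx

namespace SimpleGraph.Walk

variable {V : Type*} {G : SimpleGraph V} {v : V} {c : G.Walk v v}

theorem IsCycle.two_le_length_support_tail (hc : c.IsCycle) : 2 ≤ c.support.tail.length := by
  have := hc.three_le_length
  simp only [List.length_tail, length_support]
  omega

variable [DecidableEq V]

theorem IsHamiltonianCycle.mem_support_tail (hc : c.IsHamiltonianCycle) (x : V) :
    x ∈ c.support.tail :=
  c.support_tail_of_not_nil hc.isCycle.not_nil ▸ hc.isHamiltonian_tail.mem_support x

theorem IsHamiltonianCycle.adj_formPerm (hc : c.IsHamiltonianCycle) (x : V) :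
    G.Adj x (c.support.tail.formPerm x) := by
  have hlast : c.support.tail.getLast? = some v := by
    rw [← c.support_tail_of_not_nil hc.isCycle.not_nil,
      List.getLast?_eq_some_getLast c.tail.support_ne_nil, getLast_support]
  exact List.rel_formPerm_of_isChain_cons hc.isCycle.support_nodup
    (c.cons_tail_support ▸ c.isChain_adj_support) hlast (hc.mem_support_tail x)

theorem IsHamiltonianCycle.formPerm_apply_ne (hc : c.IsHamiltonianCycle) (x : V) :
    c.support.tail.formPerm x ≠ x :=
  (List.formPerm_apply_mem_ne_self_iff _ hc.isCycle.support_nodup x (hc.mem_support_tail x)).2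
    hc.isCycle.two_le_length_support_tail

theorem IsCycle.isCycle_formPerm (hc : c.IsCycle) : c.support.tail.formPerm.IsCycle :=
  List.isCycle_formPerm hc.support_nodup hc.two_le_length_support_tail

end SimpleGraph.Walk

theorem stmt_14_general {V : Type*} [DecidableEq V] (G : SimpleGraph V)
    (hham : ∃ (v : V) (c : G.Walk v v), c.IsHamiltonianCycle) :
    ∃ f : V → V,
      (∀ v, G.Adj v (f v)) ∧
      (∀ v : V, ∃! w : V, f w = v) ∧
      (∀ X : Set V, X.Nonempty → (∀ v ∈ X, f v ∈ X) → X = Set.univ) := by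
  obtain ⟨v, c, hc⟩ := hham
  have := hc.finite
  exact ⟨c.support.tail.formPerm, hc.adj_formPerm, c.support.tail.formPerm.bijective.existsUnique,
    fun X hX hmaps => hc.isCycle.isCycle_formPerm.eq_univ_of_mapsTo hc.formPerm_apply_ne hX hmaps⟩

theorem stmt_14 {V : Type*} [Fintype V] [DecidableEq V] (G : SimpleGraph V)
    (h3 : 3 ≤ Fintype.card V)
    (hham : ∃ (v : V) (c : G.Walk v v), c.IsHamiltonianCycle) :
    ∃ f : V → V,
      (∀ v, G.Adj v (f v)) ∧
      (∀ v : V, ∃! w : V, f w = v) ∧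
      (∀ X : Set V, X.Nonempty → (∀ v ∈ X, f v ∈ X) → X = Set.univ) :=
  stmt_14_general G hham
end
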